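/- arXiv:2205.02187 — 5 statements merged into one kernel-verified Lean document; each statement's English description precedes it below -/
import Mathlib

section
/- Let f : ℝ^n × ℝ^m → ℝ^n and consider x_{t+1} = f(x_t, u_t) + w_t with x_0 = 0. Suppose Ψ^x_t and Ψ^u_t are maps from disturbance histories (w_t, …, w_0) to ℝ^n and ℝ^m respectively, satisfying Ψ^x_0(∅-history) behavior x_0 = 0 and the achievability constraint Ψ^x_t(w_{t:0}) = f(Ψ^x_{t-1}(w_{t-1:0}), Ψ^u_{t-1}(w_{t-1:0})) + w_t for all t ≥ 1. Then the state-feedback control law that, at each time t, sets u_t = Ψ^u_t(w_{t:0}) with disturbances reconstructed by w_{t-1} = x_t − f(x_{t-1}, u_{t-1}) produces closed-loop trajectories satisfying x_t = Ψ^x_t(w_{t:0}) and u_t = Ψ^u_t(w_{t:0}) for all t and all disturbance sequences. -/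
/-- If closed-loop maps `Ψx, Ψu` satisfy `Ψx 0 = 0` and the SLS
achievability constraint for `x_{t+1} = f(x_t,u_t) + w_t` with `x_0 = 0`, then the
state-feedback control law `u_t = Ψu_t` applied to reconstructed disturbances
`w_s = x_{s+1} - f(x_s,u_s)` produces closed-loop trajectories with
`x_t = Ψx_t(w)` and `u_t = Ψu_t(w)` for every disturbance sequence. -/
theorem sls_achievability_clm_realization
    (n m : ℕ) (f : (Fin n → ℝ) → (Fin m → ℝ) → (Fin n → ℝ))
    (Ψx : ℕ → (ℕ → Fin n → ℝ) → (Fin n → ℝ))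
    (Ψu : ℕ → (ℕ → Fin n → ℝ) → (Fin m → ℝ))
    -- causality: the maps only depend on the disturbance history (w_t, …, w_0)
    (hcx : ∀ t (w w' : ℕ → Fin n → ℝ), (∀ s ≤ t, w s = w' s) → Ψx t w = Ψx t w')
    (hcu : ∀ t (w w' : ℕ → Fin n → ℝ), (∀ s ≤ t, w s = w' s) → Ψu t w = Ψu t w')
    -- initial condition behavior
    (hinit : ∀ w, Ψx 0 w = 0)
    -- SLS achievability constraint
    (hach : ∀ (w : ℕ → Fin n → ℝ) (t : ℕ),
      Ψx (t + 1) w = f (Ψx t w) (Ψu t w) + w t)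
    -- closed-loop trajectories under the controller with reconstructed disturbances
    (x : ℕ → Fin n → ℝ) (u : ℕ → Fin m → ℝ) (w : ℕ → Fin n → ℝ)
    (hx0 : x 0 = 0)
    (hdyn : ∀ t, x (t + 1) = f (x t) (u t) + w t)
    (hctrl : ∀ t, u t = Ψu t (fun s => x (s + 1) - f (x s) (u s))) :
    ∀ t, x t = Ψx t w ∧ u t = Ψu t w := by
  have hw : (fun s => x (s + 1) - f (x s) (u s)) = w := by
    funext s; rw [hdyn s]; abel
  have hu : ∀ t, u t = Ψu t w := fun t => by rw [hctrl t, hw]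
  intro t
  refine ⟨?_, hu t⟩
  induction t with
  | zero => rw [hx0, hinit]
  | succ t ih => rw [hdyn t, hach w t, ih, hu t]
end

section
/- Conversely to the achievability theorem: if a causal state-feedback controller u_t = K_t(x_t, x_{t-1}, …, x_0) is applied to x_{t+1} = f(x_t, u_t) + w_t with x_0 = 0, then the induced maps Ψ^x_t, Ψ^u_t sending each disturbance history (w_{t-1}, …, w_0) (and w_t for the state) to the resulting state x_t and input u_t are well-defined and satisfy the SLS achievability constraint Ψ^x_t(w_{t:0}) = f(Ψ^x_{t-1}(w_{t-1:0}), Ψ^u_{t-1}(w_{t-1:0})) + w_t for all t ≥ 1. -/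
/-- Closed-loop trajectory of `x_{t+1} = f(x_t, K_t(x)) + w_t`, `x_0 = 0`. -/
def slsTraj {n m : ℕ} (f : (Fin n → ℝ) → (Fin m → ℝ) → (Fin n → ℝ))
    (K : ℕ → (ℕ → Fin n → ℝ) → (Fin m → ℝ)) (w : ℕ → Fin n → ℝ) : ℕ → Fin n → ℝ
  | 0 => 0
  | t + 1 =>
      f (slsTraj f K w t)
        (K t (fun s => if _ : s ≤ t then slsTraj f K w s else 0)) + w t
  decreasing_by
    · exact Nat.lt_succ_self t
    · exact Nat.lt_succ_of_le ‹s ≤ t›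

/-- Converse achievability: any causal state-feedback controller
`u_t = K_t(x_t, …, x_0)` applied to `x_{t+1} = f(x_t,u_t) + w_t`, `x_0 = 0`,
induces well-defined closed-loop maps `Ψx, Ψu` from disturbance histories to the
resulting state and input, and these maps satisfy the SLS achievability
constraint `Ψx_{t+1}(w) = f(Ψx_t(w), Ψu_t(w)) + w_t`. -/
theorem sls_achievability_converse
    (n m : ℕ) (f : (Fin n → ℝ) → (Fin m → ℝ) → (Fin n → ℝ))
    (K : ℕ → (ℕ → Fin n → ℝ) → (Fin m → ℝ))
    -- causality of the controller: `K t` depends only on the states up to time `t`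
    (hK : ∀ t (x x' : ℕ → Fin n → ℝ), (∀ s ≤ t, x s = x' s) → K t x = K t x') :
    ∃ (Ψx : ℕ → (ℕ → Fin n → ℝ) → (Fin n → ℝ))
      (Ψu : ℕ → (ℕ → Fin n → ℝ) → (Fin m → ℝ)),
      (∀ w, Ψx 0 w = 0) ∧
      (∀ (w : ℕ → Fin n → ℝ) (t : ℕ),
        Ψx (t + 1) w = f (Ψx t w) (Ψu t w) + w t) ∧
      (∀ (w : ℕ → Fin n → ℝ) (x : ℕ → Fin n → ℝ) (u : ℕ → Fin m → ℝ),
        x 0 = 0 →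
        (∀ t, u t = K t x) →
        (∀ t, x (t + 1) = f (x t) (u t) + w t) →
        ∀ t, x t = Ψx t w ∧ u t = Ψu t w) := by
  refine ⟨fun t w => slsTraj f K w t,
    fun t w => K t (fun s => if _ : s ≤ t then slsTraj f K w s else 0),
    fun w => by show slsTraj f K w 0 = 0; rw [slsTraj],
    fun w t => by show slsTraj f K w (t+1) = _; rw [slsTraj], ?_⟩
  intro w x u hx0 hu hstep t
  have hxall : ∀ t, x t = slsTraj f K w t := by
    intro t
    induction t using Nat.strong_induction_on with
    | _ t ih =>
      match t with
      | 0 => simpa [slsTraj] using hx0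
      | t + 1 =>
        have h1 := ih t (Nat.lt_succ_self t)
        have h2 : K t x = K t (fun s => if _ : s ≤ t then slsTraj f K w s else 0) := by
          apply hK
          intro s hs
          simp only [hs, dif_pos]
          exact ih s (Nat.lt_succ_of_le hs)
        rw [hstep, hu, slsTraj, h1, h2]
  refine ⟨hxall t, ?_⟩
  rw [hu]
  apply hK
  intro s hs
  simp only [hs, dif_pos]
  exact hxall s
end

section
/- For the scalar polynomial system x_{t+1} = Σ_{j=1}^n a_j x_t^j + u_t + w_t, suppose functions g_j^{(k)} of disturbance windows are defined to satisfy the recursion Σ_{m=0}^T Σ_j g_j^{(m)}(w_{t:t-m}) = Σ_{l=1}^n a_l ( Σ_{m=0}^{T-1} Σ_j (1−α_j^{(m)}) g_j^{(m)}(w_{t-1:t-1-m}) + w_t )^l, for arbitrary parameters α_j^{(m)} ∈ [0,1]. Then the closed-loop maps Ψ^x(w_{t:t-T}) = Σ_{k=0}^{T-1} Σ_j (1−α_j^{(k)}) g_j^{(k)}(w_{t-1:t-1-k}) + w_t and Ψ^u(w_{t:t-T}) = −Σ_{k=0}^{T-1} Σ_j α_j^{(k)} g_j^{(k)}(w_{t:t-k})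 − Σ_j g_j^{(T)}(w_{t:t-T}) satisfy the SLS achievability constraint Ψ^x(w_{t:t-T}) = Σ_{j=1}^n a_j (Ψ^x(w_{t-1:t-1-T}))^j + Ψ^u(w_{t-1:t-1-T}) + w_t. -/
/-- Shift a disturbance lag-sequence back one time step: the sequence `w` lists
disturbances by lag, `w i = w_{t-i}`; `shift w` lists them relative to `t-1`. -/
def shiftLag (w : ℕ → ℝ) : ℕ → ℝ := fun i => w (i + 1)

/-- For the scalar polynomial system `x_{t+1} = Σ_{j=1}^n a_j x_t^j + u_t + w_t`,
if the monomial functions `g j^{(k)}` satisfy the defining recursion, then the closed-loop maps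
`Ψx(w) = Σ_{k=0}^{T-1} Σ_j (1-α_j^{(k)}) g_j^{(k)}(w_{t-1:t-1-k}) + w_t` and
`Ψu(w) = -Σ_{k=0}^{T-1} Σ_j α_j^{(k)} g_j^{(k)}(w_{t:t-k}) - Σ_j g_j^{(T)}(w_{t:t-T})`
satisfy the SLS achievability constraint
`Ψx(w_{t:t-T}) = Σ_{j=1}^n a_j (Ψx(w_{t-1:t-1-T}))^j + Ψu(w_{t-1:t-1-T}) + w_t`.
Disturbance windows are encoded as lag sequences: `w i = w_{t-i}`. -/
theorem scalar_polynomial_clm_achievability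
    (n T : ℕ) (a : ℕ → ℝ) (c : ℕ → ℕ)
    (g : ℕ → ℕ → (ℕ → ℝ) → ℝ) (α : ℕ → ℕ → ℝ)
    (hα : ∀ k j, α k j ∈ Set.Icc (0 : ℝ) 1)
    (hrec : ∀ w : ℕ → ℝ,
      ∑ m ∈ Finset.range (T + 1), ∑ j ∈ Finset.range (c m), g m j w
        = ∑ l ∈ Finset.Icc 1 n, a l *
            (∑ m ∈ Finset.range T, ∑ j ∈ Finset.range (c m),
                (1 - α m j) * g m j (shiftLag w) + w 0) ^ l) :
    ∀ w : ℕ → ℝ,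
      (∑ k ∈ Finset.range T, ∑ j ∈ Finset.range (c k),
          (1 - α k j) * g k j (shiftLag w) + w 0)
        = (∑ l ∈ Finset.Icc 1 n, a l *
            (∑ k ∈ Finset.range T, ∑ j ∈ Finset.range (c k),
                (1 - α k j) * g k j (shiftLag (shiftLag w)) + (shiftLag w) 0) ^ l)
          + ((-(∑ k ∈ Finset.range T, ∑ j ∈ Finset.range (c k),
                  α k j * g k j (shiftLag w)))
              - ∑ j ∈ Finset.range (c T), g T j (shiftLag w))
          + w 0 := by
  intro w
  have h := hrec (shiftLag w)
  rw [← h, Finset.sum_range_succ]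
  simp only [sub_mul, one_mul, Finset.sum_sub_distrib]
  ring
end

section
/- For the scalar quadratic system x_{t+1} = x_t^2 − x_t + u_t + w_t with x_0 = 0 and controller u_t = Ψ^u(w_{t:t-T}) given by Theorem 2 with T = 1 and parameters α_1^{(0)}, α_2^{(0)} ∈ [0,1], the closed-loop state satisfies x_{t+1} = (1−α_2^{(0)}) w_t^2 − (1−α_1^{(0)}) w_t + w_{t+1} for all t ≥ 0; in particular if |w_s| ≤ ε ≤ 1 for all s, then |x_t| ≤ ε(3 − α_1^{(0)} − α_2^{(0)}) ≤ 3ε for all t, so the closed-loop system is bounded-input bounded-state. -/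
/-- The Theorem-2 input closed-loop map for the scalar quadratic system with
FIR horizon `T = 1`: `Ψu(w_t, w_{t-1}) = -Σ_j α_j^{(0)} g_j^{(0)}(w_t) - Σ_j g_j^{(1)}(w_t, w_{t-1})`,
where `g₁^{(0)}(w) = -w`, `g₂^{(0)}(w) = w²` and the sum of the `g_j^{(1)}` is
determined by the defining recursion. -/
noncomputable def psiUquad (α₁ α₂ wt wp : ℝ) : ℝ :=
  α₁ * wt - α₂ * wt ^ 2 -
    (((1 - α₂) * wp ^ 2 - (1 - α₁) * wp + wt) ^ 2
      - ((1 - α₂) * wp ^ 2 - (1 - α₁) * wp + wt)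
      - (wt ^ 2 - wt))

/-- For `x_{t+1} = x_t² − x_t + u_t + w_t`, `x_0 = 0`, under the
Theorem-2 controller with `T = 1` and `α₁⁽⁰⁾, α₂⁽⁰⁾ ∈ [0,1]`, the closed-loop
state satisfies `x_{t+2} = (1−α₂) w_t² − (1−α₁) w_t + w_{t+1}` for all `t ≥ 0`
(the state is the FIR map of the two most recent disturbances); in particular,
if `|w_s| ≤ ε ≤ 1` for all `s`, then `|x_t| ≤ ε (3 − α₁ − α₂) ≤ 3ε` for all
`t`, so the closed loop is bounded-input bounded-state. -/
theorem scalar_quadratic_partial_linearization_closed_loop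
    (α₁ α₂ : ℝ) (h₁ : α₁ ∈ Set.Icc (0 : ℝ) 1) (h₂ : α₂ ∈ Set.Icc (0 : ℝ) 1)
    (x u w : ℕ → ℝ) (hx0 : x 0 = 0)
    (hdyn : ∀ t, x (t + 1) = (x t) ^ 2 - x t + u t + w t)
    (hu0 : u 0 = psiUquad α₁ α₂ 0 0)
    (hu1 : u 1 = psiUquad α₁ α₂ (w 0) 0)
    (hu : ∀ t, u (t + 2) = psiUquad α₁ α₂ (w (t + 1)) (w t)) :
    (∀ t, x (t + 2) = (1 - α₂) * (w t) ^ 2 - (1 - α₁) * w t + w (t + 1)) ∧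
    ∀ ε : ℝ, ε ≤ 1 → (∀ s, |w s| ≤ ε) →
      ∀ t, |x t| ≤ ε * (3 - α₁ - α₂) ∧ |x t| ≤ 3 * ε := by
  obtain ⟨h1l, h1r⟩ := h₁
  obtain ⟨h2l, h2r⟩ := h₂
  have hx1 : x 1 = w 0 := by
    have h := hdyn 0
    rw [hx0, hu0] at h
    simp [psiUquad] at h
    linarith
  have key : ∀ t, x (t + 2) = (1 - α₂) * (w t) ^ 2 - (1 - α₁) * w t + w (t + 1) := by
    intro t
    induction t with
    | zero =>
      have h := hdyn 1
      rw [hx1, hu1] at h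
      rw [h, psiUquad]; ring
    | succ n ih =>
      have h := hdyn (n + 2)
      rw [ih, hu n] at h
      rw [h, psiUquad]; ring
  refine ⟨key, ?_⟩
  intro ε hε1 hw t
  have hε0 : 0 ≤ ε := le_trans (abs_nonneg _) (hw 0)
  have hfac : 1 ≤ 3 - α₁ - α₂ := by linarith
  have hmain : |x t| ≤ ε * (3 - α₁ - α₂) := by
    match t with
    | 0 => rw [hx0]; simpa using mul_nonneg hε0 (by linarith)
    | 1 =>
      rw [hx1]
      calc |w 0| ≤ ε := hw 0
        _ ≤ ε * (3 - α₁ - α₂) := le_mul_of_one_le_right hε0 hfac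
    | (n+2) =>
      rw [key n, abs_le]
      obtain ⟨ha1, ha2⟩ := abs_le.1 (hw n)
      obtain ⟨hb1, hb2⟩ := abs_le.1 (hw (n+1))
      have hsq : w n ^ 2 ≤ ε ^ 2 := sq_le_sq' ha1 ha2
      have hsq0 : (0:ℝ) ≤ w n ^ 2 := sq_nonneg _
      have hε2 : ε ^ 2 ≤ ε := by nlinarith
      constructor <;> nlinarith
  exact ⟨hmain, hmain.trans (by nlinarith)⟩
end

section
/- Consider the vector polynomial system x_{t+1} = Σ_{j=1}^n H_j x_t^{⊗j} + u_t + w_t with x_t, u_t, w_t ∈ ℝ^n and H_j linear maps from ℝ^{n^j} to ℝ^n. If functions G_j^{(k)} of disturbance windows satisfy the recursion Σ_{m=0}^T Σ_j G_j^{(m)}(w_{t:t-m}) = Σ_{l=1}^n H_l ( Σ_{m=0}^{T-1} Σ_j (I − A_j^{(m)}) G_j^{(m)}(w_{t-1:t-1-m}) + w_t )^{⊗l} for matrices A_j^{(m)}, then the closed-loop maps Ψ^x(w_{t:t-T}) = Σ_{k=0}^{T-1} Σ_j (I − A_j^{(k)}) G_j^{(k)}(w_{t-1:t-1-k}) + w_t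 and Ψ^u(w_{t:t-T}) = −Σ_{k=0}^{T-1} Σ_j A_j^{(k)} G_j^{(k)}(w_{t:t-k}) − Σ_j G_j^{(T)}(w_{t:t-T}) satisfy the vector SLS achievability constraint Ψ^x(w_{t:t-T}) = Σ_{j=1}^n H_j (Ψ^x(w_{t-1:t-1-T}))^{⊗j} + Ψ^u(w_{t-1:t-1-T}) + w_t. -/
/-- The `j`-fold Kronecker power of a vector `v ∈ ℝⁿ`, represented as the
function on multi-indices `f : Fin j → Fin n` with value `∏ i, v (f i)`. -/
def kpow {n : ℕ} (v : Fin n → ℝ) (j : ℕ) : (Fin j → Fin n) → ℝ :=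
  fun f => ∏ i, v (f i)

/-- Shift a vector-valued disturbance lag-sequence back one time step. -/
def vshift {n : ℕ} (w : ℕ → Fin n → ℝ) : ℕ → Fin n → ℝ := fun i => w (i + 1)

/-- For the vector polynomial system
`x_{t+1} = Σ_{j=1}^n H_j x_t^{⊗j} + u_t + w_t` with linear maps
`H_j : ℝ^{nʲ} → ℝⁿ`, if the functions `G_j^{(k)}` satisfy the defining
recursion with matrices `A_j^{(m)}`, then the closed-loop maps
`Ψx(w) = Σ_{k=0}^{T-1} Σ_j (I − A_j^{(k)}) G_j^{(k)}(w_{t-1:t-1-k}) + w_t` and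
`Ψu(w) = −Σ_{k=0}^{T-1} Σ_j A_j^{(k)} G_j^{(k)}(w_{t:t-k}) − Σ_j G_j^{(T)}(w_{t:t-T})`
satisfy the vector SLS achievability constraint
`Ψx(w_{t:t-T}) = Σ_{j=1}^n H_j (Ψx(w_{t-1:t-1-T}))^{⊗j} + Ψu(w_{t-1:t-1-T}) + w_t`.
Windows are encoded as lag sequences, `w i = w_{t-i}`. -/
theorem vector_polynomial_clm_achievability
    (n T : ℕ)
    (H : (j : ℕ) → ((Fin j → Fin n) → ℝ) →ₗ[ℝ] (Fin n → ℝ))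
    (c : ℕ → ℕ)
    (G : ℕ → ℕ → (ℕ → Fin n → ℝ) → (Fin n → ℝ))
    (A : ℕ → ℕ → Matrix (Fin n) (Fin n) ℝ)
    (hrec : ∀ w : ℕ → Fin n → ℝ,
      ∑ m ∈ Finset.range (T + 1), ∑ j ∈ Finset.range (c m), G m j w
        = ∑ l ∈ Finset.Icc 1 n,
            H l (kpow (∑ m ∈ Finset.range T, ∑ j ∈ Finset.range (c m),
                  ((1 : Matrix (Fin n) (Fin n) ℝ) - A m j).mulVec
                    (G m j (vshift w)) + w 0) l)) :
    ∀ w : ℕ → Fin n → ℝ,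
      (∑ k ∈ Finset.range T, ∑ j ∈ Finset.range (c k),
          ((1 : Matrix (Fin n) (Fin n) ℝ) - A k j).mulVec
            (G k j (vshift w)) + w 0)
        = (∑ l ∈ Finset.Icc 1 n,
            H l (kpow (∑ k ∈ Finset.range T, ∑ j ∈ Finset.range (c k),
                  ((1 : Matrix (Fin n) (Fin n) ℝ) - A k j).mulVec
                    (G k j (vshift (vshift w))) + (vshift w) 0) l))
          + ((-(∑ k ∈ Finset.range T, ∑ j ∈ Finset.range (c k),
                  (A k j).mulVec (G k j (vshift w))))
              - ∑ j ∈ Finset.range (c T), G T j (vshift w))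
          + w 0 := by
  intro w
  rw [← hrec (vshift w), Finset.sum_range_succ]
  have hm : ∀ k j, ((1 : Matrix (Fin n) (Fin n) ℝ) - A k j).mulVec
      (G k j (vshift w)) = G k j (vshift w) - (A k j).mulVec (G k j (vshift w)) := by
    intro k j
    rw [Matrix.sub_mulVec, Matrix.one_mulVec]
  simp only [hm, Finset.sum_sub_distrib]
  abel
end
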